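/- arXiv:2101.08707 — 3 statements merged into one kernel-verified Lean document; each statement's English description precedes it below -/
import Mathlib

section
/- If f : X → Y is a coarsely continuous map from a metrically convex metric space X to a metric space Y, then f is Lipschitz for large distances: for every d > 0, sup{ d_Y(f(x), f(y)) / d_X(x,y) : d_X(x,y) ≥ d } < ∞. -/
/-- A metric space is metrically convex if between any two points there are points
realizing every convex combination of the distance. -/
def MetricallyConvex (X : Type*) [MetricSpace X] : Prop :=
  ∀ x₀ x₁ : X, ∀ lam : ℝ, 0 < lam → lam < 1 →
    ∃ xl : X, dist x₀ xl = lam * dist x₀ x₁ ∧ dist x₁ xl = (1 - lam) * dist x₀ x₁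

theorem coarselyContinuous_lipschitz_for_large_distances
    {X Y : Type*} [MetricSpace X] [MetricSpace Y] (f : X → Y)
    (hconv : MetricallyConvex X)
    (hf : ∀ t : ℝ, 0 < t → ∃ M : ℝ, ∀ x y : X, dist x y ≤ t → dist (f x) (f y) ≤ M) :
    ∀ d : ℝ, 0 < d → ∃ C : ℝ, ∀ x y : X, d ≤ dist x y →
      dist (f x) (f y) ≤ C * dist x y := by
  intro d hd
  obtain ⟨M, hM⟩ := hf d hd
  set M' : ℝ := max M 0 with hM'def
  have hM'0 : 0 ≤ M' := le_max_right _ _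
  have hM'bound : ∀ x y : X, dist x y ≤ d → dist (f x) (f y) ≤ M' :=
    fun x y h => (hM x y h).trans (le_max_left _ _)
  -- key: if dist x y ≤ n * d then dist (f x) (f y) ≤ n * M'
  have key : ∀ n : ℕ, ∀ x y : X, dist x y ≤ n * d → dist (f x) (f y) ≤ n * M' := by
    intro n
    induction n with
    | zero =>
      intro x y h
      simp only [Nat.cast_zero, zero_mul] at h ⊢
      have : x = y := by
        have := dist_nonneg (x := x) (y := y)
        have : dist x y = 0 := le_antisymm h this
        exact dist_eq_zero.mp this
      simp [this]
    | succ n ih =>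
      intro x y h
      by_cases hxy : dist x y ≤ d
      · calc dist (f x) (f y) ≤ M' := hM'bound x y hxy
          _ ≤ (n + 1 : ℕ) * M' := by
            push_cast
            nlinarith [hM'0, Nat.cast_nonneg (α := ℝ) n]
      · push_neg at hxy
        have hdist0 : 0 < dist x y := hd.trans hxy
        obtain ⟨z, hz1, hz2⟩ := hconv x y (d / dist x y)
          (div_pos hd hdist0) ((div_lt_one hdist0).mpr hxy)
        rw [div_mul_cancel₀ _ (ne_of_gt hdist0)] at hz1
        have hz2' : dist y z = dist x y - d := by
          rw [hz2]; field_simp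
        have hyz : dist y z ≤ n * d := by
          rw [hz2']
          push_cast at h ⊢
          linarith
        have h1 : dist (f x) (f z) ≤ M' := hM'bound x z (le_of_eq hz1)
        have h2 : dist (f z) (f y) ≤ n * M' := by
          rw [dist_comm]; exact ih y z hyz
        calc dist (f x) (f y) ≤ dist (f x) (f z) + dist (f z) (f y) := dist_triangle _ _ _
          _ ≤ M' + n * M' := add_le_add h1 h2
          _ = (n + 1 : ℕ) * M' := by push_cast; ring
  refine ⟨2 * M' / d, fun x y hxy => ?_⟩
  have hdist0 : 0 < dist x y := hd.trans_le hxy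
  set n : ℕ := ⌈dist x y / d⌉₊ with hn
  have hdn : dist x y ≤ n * d := by
    have := Nat.le_ceil (dist x y / d)
    calc dist x y = (dist x y / d) * d := by field_simp
      _ ≤ n * d := by
        apply mul_le_mul_of_nonneg_right this hd.le
  have hnle : (n : ℝ) ≤ 2 * dist x y / d := by
    have h1 : (n : ℝ) ≤ dist x y / d + 1 :=
      (Nat.ceil_lt_add_one (by positivity)).le
    have h2 : (1 : ℝ) ≤ dist x y / d := (one_le_div hd).mpr hxy
    have h3 : 2 * dist x y / d = 2 * (dist x y / d) := by ring
    rw [h3]; linarith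
  calc dist (f x) (f y) ≤ n * M' := key n x y hdn
    _ ≤ (2 * dist x y / d) * M' := mul_le_mul_of_nonneg_right hnle hM'0
    _ = 2 * M' / d * dist x y := by ring
end

section
/- If f : X → Y is a co-uniformly continuous map between metric spaces and Y is a connected metric space, then f is surjective. -/
theorem coUniformlyContinuous_surjective {X Y : Type*} [MetricSpace X] [MetricSpace Y]
    [Nonempty X] [ConnectedSpace Y] (f : X → Y)
    (hf : ∀ d : ℝ, 0 < d → ∃ δ : ℝ, 0 < δ ∧ ∀ x : X,
      Metric.closedBall (f x) δ ⊆ f '' Metric.closedBall x d) :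
    Function.Surjective f := by
  obtain ⟨δ, hδ, h⟩ := hf 1 one_pos
  have hsub : ∀ x : X, Metric.closedBall (f x) δ ⊆ Set.range f := fun x =>
    (h x).trans (Set.image_subset_range _ _)
  have hclopen : IsClopen (Set.range f) := by
    constructor
    · refine isClosed_of_closure_subset fun y hy => ?_
      obtain ⟨z, hz, hz'⟩ := Metric.mem_closure_iff.mp hy δ hδ
      obtain ⟨x, rfl⟩ := hz
      exact hsub x (Metric.mem_closedBall.mpr hz'.le)
    · rw [Metric.isOpen_iff]
      rintro y ⟨x, rfl⟩
      exact ⟨δ, hδ, (Metric.ball_subset_closedBall).trans (hsub x)⟩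
  have := hclopen.eq_univ ⟨f Classical.ofNonempty, Set.mem_range_self _⟩
  intro y
  exact Set.eq_univ_iff_forall.mp this y
end

section
/- There exists a map i : T → T on the countably branching tree (finite subsets of ℕ with the tree metric d_T) such that d_T(i(I), i(J)) = 2·d_T(I, J) for all I, J, and such that for every J in the image, the immediate descendants of i-image vertices {i(J) ∪ J₁, i(J) ∪ J₂, ...} (each with |J_i| = 2 and max i(J) < min J_i) can be enumerated so that max J_i < min J_{i+1} for all i. -/
/-- `I` is an initial segment of `J` in increasing order: `I ⊆ J` and every element of `I`
is smaller than every element of `J \ I`. -/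
def IsInitSeg (I J : Finset ℕ) : Prop :=
  I ⊆ J ∧ ∀ a ∈ I, ∀ b ∈ J, b ∉ I → a < b

/-- The greatest common ancestor of two vertices of the countably branching tree:
the longest common initial segment of `I` and `J` in increasing order. -/
def gca (I J : Finset ℕ) : Finset ℕ :=
  (I ∩ J).filter (fun n => ∀ m ≤ n, (m ∈ I ↔ m ∈ J))

/-- The shortest-path metric on the countably branching tree, whose vertices are
the finite subsets of `ℕ`. -/
noncomputable def treeDist (I J : Finset ℕ) : ℝ :=
  (I.card : ℝ) + J.card - 2 * (gca I J).card

/-- The doubling map: each element `a` is replaced by the block `{2a, 2a+1}`. -/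
def dbl (I : Finset ℕ) : Finset ℕ :=
  I.biUnion (fun a => {2 * a, 2 * a + 1})

lemma mem_dbl {I : Finset ℕ} {m : ℕ} : m ∈ dbl I ↔ m / 2 ∈ I := by
  simp only [dbl, Finset.mem_biUnion, Finset.mem_insert, Finset.mem_singleton]
  constructor
  · rintro ⟨a, ha, h | h⟩ <;> (have hm : m / 2 = a := by omega) <;> rwa [hm]
  · intro h
    exact ⟨m / 2, h, by omega⟩

lemma card_dbl (I : Finset ℕ) : (dbl I).card = 2 * I.card := by
  rw [dbl, Finset.card_biUnion]
  · rw [Finset.sum_congr rfl (g := fun _ => 2) (fun a _ => by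
      rw [Finset.card_insert_of_notMem (by simp only [Finset.mem_singleton]; omega),
        Finset.card_singleton]), Finset.sum_const, smul_eq_mul]
    ring
  · intro a _ b _ hab
    simp only [Finset.disjoint_left, Finset.mem_insert, Finset.mem_singleton]
    rintro x (h | h) (h' | h') <;> omega

lemma gca_dbl (I J : Finset ℕ) : gca (dbl I) (dbl J) = dbl (gca I J) := by
  ext m
  simp only [gca, mem_dbl, Finset.mem_filter, Finset.mem_inter, mem_dbl]
  constructor
  · rintro ⟨⟨h1, h2⟩, h3⟩
    refine ⟨⟨h1, h2⟩, ?_⟩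
    intro j hj
    have := h3 (2 * j) (by omega)
    rwa [Nat.mul_div_cancel_left j (by norm_num : 0 < 2)] at this
  · rintro ⟨⟨h1, h2⟩, h3⟩
    refine ⟨⟨h1, h2⟩, ?_⟩
    intro k hk
    exact h3 (k / 2) (by omega)

/-- There is a `2`-isometric embedding of the countably branching tree into itself whose
image is a pruned isometric subset: at every vertex of the image, the immediate descendants
within the image can be enumerated so that the added blocks occur in disjoint increasing
ranges of indices. -/
theorem exists_pruned_isometric_subtree :
    ∃ ι : Finset ℕ → Finset ℕ,
      (∀ I J : Finset ℕ, treeDist (ι I) (ι J) = 2 * treeDist I J) ∧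
      ∀ J : Finset ℕ, ∃ e : ℕ → Finset ℕ,
        (∀ n, (e n).card = 2) ∧
        (∀ n, ∀ a ∈ ι J, ∀ b ∈ e n, a < b) ∧
        (∀ n, ∀ a ∈ e n, ∀ b ∈ e (n + 1), a < b) ∧
        (∀ K : Finset ℕ,
          (K ∈ Set.range ι ∧ IsInitSeg (ι J) K ∧ K.card = (ι J).card + 2) ↔
            ∃ n, K = ι J ∪ e n) := by
  refine ⟨dbl, ?_, ?_⟩
  · intro I J
    simp only [treeDist, gca_dbl, card_dbl]
    push_cast
    ring
  · intro J
    set s : ℕ := if J = ∅ then 0 else J.sup id + 1 with hs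
    have hsgt : ∀ a ∈ J, a < s := by
      intro a ha
      have hne : J ≠ ∅ := Finset.ne_empty_of_mem ha
      simp only [hs, if_neg hne]
      exact Nat.lt_succ_of_le (Finset.le_sup (f := id) ha)
    refine ⟨fun n => {2 * (n + s), 2 * (n + s) + 1}, ?_, ?_, ?_, ?_⟩
    · intro n
      rw [Finset.card_insert_of_notMem (by simp only [Finset.mem_singleton]; omega),
        Finset.card_singleton]
    · intro n a ha b hb
      rw [mem_dbl] at ha
      have := hsgt _ ha
      simp only [Finset.mem_insert, Finset.mem_singleton] at hb
      omega
    · intro n a ha b hb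
      simp only [Finset.mem_insert, Finset.mem_singleton] at ha hb
      omega
    · intro K
      constructor
      · rintro ⟨⟨J', rfl⟩, ⟨hsub, hlt⟩, hcard⟩
        have hJJ' : J ⊆ J' := by
          intro a ha
          have h2a : (2 * a : ℕ) ∈ dbl J' := hsub (mem_dbl.2 (by
            rwa [Nat.mul_div_cancel_left a (by norm_num : 0 < 2)]))
          rw [mem_dbl, Nat.mul_div_cancel_left a (by norm_num : 0 < 2)] at h2a
          exact h2a
        rw [card_dbl, card_dbl] at hcard
        have hcard' : J'.card = J.card + 1 := by omega
        obtain ⟨b, hbJ', hbJ⟩ : ∃ b ∈ J', b ∉ J := by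
          by_contra h
          push_neg at h
          have h2 : J'.card = J.card := by rw [Finset.Subset.antisymm h hJJ']
          omega
        have hJ' : J' = insert b J := by
          refine (Finset.eq_of_subset_of_card_le ?_ ?_).symm
          · intro x hx
            simp only [Finset.mem_insert] at hx
            rcases hx with rfl | hx
            · exact hbJ'
            · exact hJJ' hx
          · rw [Finset.card_insert_of_notMem hbJ, hcard']
        have hbbig : ∀ a ∈ J, a < b := by
          intro a ha
          have h2a : (2 * a + 1 : ℕ) ∈ dbl J := mem_dbl.2 (by
            have : (2 * a + 1) / 2 = a := by omega
            rwa [this])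
          have h2b : (2 * b : ℕ) ∈ dbl J' := mem_dbl.2 (by
            rwa [Nat.mul_div_cancel_left b (by norm_num : 0 < 2)])
          have h2bn : (2 * b : ℕ) ∉ dbl J := by
            rw [mem_dbl, Nat.mul_div_cancel_left b (by norm_num : 0 < 2)]
            exact hbJ
          have := hlt _ h2a _ h2b h2bn
          omega
        have hbs : s ≤ b := by
          rcases J.eq_empty_or_nonempty with rfl | ⟨a0, ha0⟩
          · simp [hs]
          · have h0 : (0 : ℕ) < b := lt_of_le_of_lt (Nat.zero_le _) (hbbig a0 ha0)
            have hsup : J.sup id < b :=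
              (Finset.sup_lt_iff h0).2 (fun a ha => hbbig a ha)
            simp only [hs, if_neg (Finset.nonempty_iff_ne_empty.1 ⟨a0, ha0⟩)]
            omega
        refine ⟨b - s, ?_⟩
        rw [hJ']
        ext x
        simp only [mem_dbl, Finset.mem_union, Finset.mem_insert, Finset.mem_singleton,
          mem_dbl]
        constructor
        · rintro (hx | hx)
          · right; omega
          · left; exact hx
        · rintro (hx | hx | hx)
          · right; exact hx
          · left; omega
          · left; omega
      · rintro ⟨n, rfl⟩
        have hns : n + s ∉ J := fun h => by have := hsgt _ h; omega
        have hE : dbl (insert (n + s) J) = dbl J ∪ {2 * (n + s), 2 * (n + s) + 1} := by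
          ext x
          simp only [mem_dbl, Finset.mem_union, Finset.mem_insert, Finset.mem_singleton,
            mem_dbl]
          constructor
          · rintro (h | h)
            · right; omega
            · left; exact h
          · rintro (h | h | h)
            · right; exact h
            · left; omega
            · left; omega
        refine ⟨⟨insert (n + s) J, hE⟩, ⟨Finset.subset_union_left, ?_⟩, ?_⟩
        · intro a ha b hb hbn
          rw [mem_dbl] at ha
          have has := hsgt _ ha
          simp only [Finset.mem_union, Finset.mem_insert, Finset.mem_singleton] at hb
          rcases hb with hb | rfl | rfl
          · exact absurd hb hbn
          · omega
          · omega
        · rw [Finset.card_union_of_disjoint, card_dbl]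
          · rw [Finset.card_insert_of_notMem (by simp only [Finset.mem_singleton]; omega),
              Finset.card_singleton]
          · simp only [Finset.disjoint_left, mem_dbl, Finset.mem_insert, Finset.mem_singleton]
            intro x hx
            have := hsgt _ hx
            omega
end
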